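/- arXiv:math/9706209 — 3 statements merged into one kernel-verified Lean document; each statement's English description precedes it below -/
import Mathlib

section
/- There exists a hereditary collection F of finite subsets of ℕ such that for every infinite subset M = (m_i) of ℕ, both S_1(M) ⊄ F and F(M) ⊄ S_1, where S_1(M) = {{m_i : i ∈ E} : E ∈ S_1} and F(M) = {{m_i : i ∈ E} : E ∈ F}. An explicit example is F = ⋃_{k≥1} { {1} ∪ E, E : E ⊆ F_k } where F_k = {2^k + 1, …, 2^k + k}. -/
open Ordinal Set

/-- 1-indexed increasing enumeration of an (infinite) subset of ℕ. -/
noncomputable def enum1 (M : Set ℕ) (i : ℕ) : ℕ := Nat.nth (· ∈ M) (i - 1)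

/-- A collection of finite subsets of ℕ is hereditary if closed under subsets. -/
def Hereditary (𝓕 : Set (Finset ℕ)) : Prop :=
  ∀ ⦃E F : Finset ℕ⦄, E ⊆ F → F ∈ 𝓕 → E ∈ 𝓕

/-- A collection is spreading if closed under spreadings. -/
def Spreading (𝓕 : Set (Finset ℕ)) : Prop :=
  ∀ F ∈ 𝓕, ∀ (G : Finset ℕ) (h : G.card = F.card),
    (∀ i : Fin F.card, ((F.orderIsoOfFin rfl i : ℕ)) ≤ ((G.orderIsoOfFin h i : ℕ))) → G ∈ 𝓕

/-- `𝓕[N]`: members of `𝓕` that are subsets of `N`. -/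
def restrict (𝓕 : Set (Finset ℕ)) (N : Set ℕ) : Set (Finset ℕ) :=
  {E ∈ 𝓕 | (E : Set ℕ) ⊆ N}

/-- `𝓕(M)`: push the collection `𝓕` onto the infinite set `M` via its increasing
(1-indexed) enumeration. -/
noncomputable def push (𝓕 : Set (Finset ℕ)) (M : Set ℕ) : Set (Finset ℕ) :=
  {F | ∃ E ∈ 𝓕, F = E.image (enum1 M)}

/-- Characteristic function of a finite set, as a point of the Cantor space. -/
def chi (F : Finset ℕ) : ℕ → Bool := fun n => decide (n ∈ F)

/-- Pointwise closedness of a family of finite subsets of ℕ, viewed in `2^ℕ`. -/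
def PtwiseClosed (𝓕 : Set (Finset ℕ)) : Prop := IsClosed (chi '' 𝓕)

/-- An adequate family is hereditary and pointwise closed. -/
def Adequate (𝓕 : Set (Finset ℕ)) : Prop := Hereditary 𝓕 ∧ PtwiseClosed 𝓕

/-- The first Schreier class `S₁ = {F : |F| ≤ min F}` (with `∅ ∈ S₁`). -/
def Schreier1 : Set (Finset ℕ) := {F | ∀ n ∈ F, F.card ≤ n}

/-- A system of Schreier classes `S α` for all ordinals, together with the fixed
cofinal sequences used at limit stages. -/
structure SchreierSystem where
  S : Ordinal → Set (Finset ℕ)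
  seq : Ordinal → ℕ → Ordinal
  seq_lt : ∀ {α : Ordinal}, Order.IsSuccLimit α → ∀ n, seq α n < α
  seq_mono : ∀ {α : Ordinal}, Order.IsSuccLimit α → StrictMono (seq α)
  seq_sup : ∀ {α : Ordinal}, Order.IsSuccLimit α → (⨆ n, seq α n) = α
  zero_def : S 0 = {F | ∃ n : ℕ, 1 ≤ n ∧ F = {n}} ∪ {∅}
  one_def : S 1 = Schreier1
  succ_def : ∀ α : Ordinal, S (α + 1) =
    {F | ∃ (k : ℕ) (Fs : Fin (k + 1) → Finset ℕ),
      F = Finset.univ.biUnion Fs ∧ (∀ i, Fs i ∈ S α) ∧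
      (∀ i j : Fin (k + 1), i < j → ∀ x ∈ Fs i, ∀ y ∈ Fs j, x < y) ∧
      (∀ x ∈ Fs 0, k + 1 ≤ x)}
  limit_def : ∀ α : Ordinal, Order.IsSuccLimit α → S α =
    {F | ∃ n : ℕ, 1 ≤ n ∧ F ∈ S (seq α n) ∧ ∀ m ∈ F, n ≤ m}

/-- Transfinitely iterated strong Cantor–Bendixson derivative of `G[L]`. -/
noncomputable def sDeriv (G : Set (Finset ℕ)) (L : Set ℕ) : Ordinal → Set (Finset ℕ) :=
  fun β => Ordinal.limitRecOn β (restrict G L)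
    (fun _ D => {A ∈ D | {l ∈ L | insert l A ∉ D}.Finite})
    (fun o _ ih => ⋂ (b : Set.Iio o), ih b b.2)

/-- Strong Cantor–Bendixson index of `G[L]`. -/
noncomputable def sIndex (G : Set (Finset ℕ)) (L : Set ℕ) : Ordinal :=
  sInf {β | sDeriv G L β = ∅}

/-!
Take `𝓕` to consist of the subsets of `{1} ∪ F_k`, `k ≥ 1`, where `F_k = {2^k + 1, …, 2^k + k}`.
Any two elements `2 ≤ x, y` of one member of `𝓕` lie in a common block `F_k`, hence `y < 2x`;
but `S₁(M)` contains the pair `{m₃, m_b}` with `b = 2m₃ + 1`, and `m_b ≥ 2m₃`.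
Conversely `{1} ∪ F_k ∈ 𝓕` is sent to a set of size `k + 1` with minimum `m₁`, which is not in
`S₁` once `k ≥ m₁`.
-/

def schreierBlock (k : ℕ) : Finset ℕ := Finset.Ioc (2 ^ k) (2 ^ k + k)

theorem card_schreierBlock (k : ℕ) : (schreierBlock k).card = k := by
  simp [schreierBlock]

theorem one_lt_of_mem_schreierBlock {k x : ℕ} (hx : x ∈ schreierBlock k) : 1 < x := by
  have := k.one_le_two_pow
  simp only [schreierBlock, Finset.mem_Ioc] at hx
  omega

theorem lt_two_mul_of_mem_schreierBlock {k x y : ℕ} (hx : x ∈ schreierBlock k)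
    (hy : y ∈ schreierBlock k) : y < 2 * x := by
  have := k.lt_two_pow_self
  simp only [schreierBlock, Finset.mem_Ioc] at hx hy
  omega

theorem one_le_of_mem_insert_one_schreierBlock {k x : ℕ}
    (hx : x ∈ insert 1 (schreierBlock k)) : 1 ≤ x := by
  rcases Finset.mem_insert.1 hx with rfl | hx
  · rfl
  · exact (one_lt_of_mem_schreierBlock hx).le

theorem card_insert_one_schreierBlock (k : ℕ) : (insert 1 (schreierBlock k)).card = k + 1 := by
  rw [Finset.card_insert_of_notMem fun h => (one_lt_of_mem_schreierBlock h).false,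
    card_schreierBlock]

def blockFamily : Set (Finset ℕ) := {F | ∃ k, 1 ≤ k ∧ F ⊆ insert 1 (schreierBlock k)}

theorem hereditary_blockFamily : Hereditary blockFamily := by
  rintro E F hEF ⟨k, hk, hF⟩
  exact ⟨k, hk, hEF.trans hF⟩

theorem lt_two_mul_of_mem_blockFamily {F : Finset ℕ} (hF : F ∈ blockFamily) {x y : ℕ}
    (hx : x ∈ F) (hy : y ∈ F) (hx2 : 2 ≤ x) (hy2 : 2 ≤ y) : y < 2 * x := by
  obtain ⟨k, -, hFk⟩ := hF
  rcases Finset.mem_insert.1 (hFk hx) with rfl | hxk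
  · omega
  rcases Finset.mem_insert.1 (hFk hy) with rfl | hyk
  · omega
  exact lt_two_mul_of_mem_schreierBlock hxk hyk

section Enumeration

variable {M : Set ℕ}

theorem le_enum1_succ (hM : M.Infinite) (i : ℕ) : i ≤ enum1 M (i + 1) :=
  (Nat.nth_strictMono hM).le_apply

theorem enum1_injOn (hM : M.Infinite) : InjOn (enum1 M) (Ici 1) := by
  intro i hi j hj hij
  have := Nat.nth_injective hM hij
  simp only [Set.mem_Ici] at hi hj
  omega

theorem card_image_enum1 (hM : M.Infinite) {E : Finset ℕ} (hE : ∀ i ∈ E, 1 ≤ i) :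
    (E.image (enum1 M)).card = E.card :=
  Finset.card_image_of_injOn fun _ hi _ hj => enum1_injOn hM (hE _ hi) (hE _ hj)

theorem exists_pair_mem_push_schreier1 (hM : M.Infinite) :
    ∃ x y, 2 ≤ x ∧ 2 * x ≤ y ∧ {x, y} ∈ push Schreier1 M := by
  have hx : 2 ≤ enum1 M 3 := le_enum1_succ hM 2
  refine ⟨enum1 M 3, enum1 M (2 * enum1 M 3 + 1), hx, le_enum1_succ hM _,
    {3, 2 * enum1 M 3 + 1}, ?_, by simp⟩
  intro n hn
  have hcard : ({3, 2 * enum1 M 3 + 1} : Finset ℕ).card ≤ 2 := Finset.card_le_two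
  simp only [Finset.mem_insert, Finset.mem_singleton] at hn
  omega

theorem image_enum1_notMem_schreier1 (hM : M.Infinite) {E : Finset ℕ} (h1 : 1 ∈ E)
    (hE : ∀ i ∈ E, 1 ≤ i) (hcard : enum1 M 1 < E.card) :
    E.image (enum1 M) ∉ Schreier1 := fun hS =>
  (hS _ (Finset.mem_image_of_mem _ h1)).not_gt (card_image_enum1 hM hE ▸ hcard)

end Enumeration

theorem stmt4 :
    ∃ 𝓕 : Set (Finset ℕ), Hereditary 𝓕 ∧
      ∀ M : Set ℕ, M.Infinite →
        ¬ push Schreier1 M ⊆ 𝓕 ∧ ¬ push 𝓕 M ⊆ Schreier1 := by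
  refine ⟨blockFamily, hereditary_blockFamily, fun M hM => ⟨fun hsub => ?_, fun hsub => ?_⟩⟩
  · obtain ⟨x, y, hx, hxy, hpair⟩ := exists_pair_mem_push_schreier1 hM
    have := lt_two_mul_of_mem_blockFamily (hsub hpair) (x := x) (y := y) (by simp) (by simp) hx
      (by omega)
    omega
  · set k := enum1 M 1 + 1
    refine image_enum1_notMem_schreier1 hM (Finset.mem_insert_self 1 _)
      (fun _ => one_le_of_mem_insert_one_schreierBlock) ?_
      (hsub ⟨_, ⟨k, by omega, subset_rfl⟩, rfl⟩)
    rw [card_insert_one_schreierBlock]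
    omega
end

section
/- (Dichotomy for S_1.) For every hereditary collection F of finite subsets of ℕ and every infinite N̄ ⊆ ℕ, either there exists an infinite M = (m_i) ⊆ N̄ such that S_1(M) = {{m_i : i ∈ E} : E ∈ S_1} ⊆ F, or there exist infinite M ⊆ N̄ and N = (n_i) ⊆ ℕ such that F[N](M) = {{m_i : i ∈ E} : E ∈ F, E ⊆ N} ⊆ S_1. -/
open Ordinal Set

/-
If for some `k` an infinite `L ⊆ N̄` contains no `k`-element member of `𝓕`, then, `𝓕` being
hereditary, every member of `𝓕[L]` has fewer than `k` elements, and pushing `𝓕[L]` onto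
`M = N̄ ∩ [k, ∞)` lands in `S₁`. Otherwise every infinite subset of `N̄` contains `k`-element
members of `𝓕` for every `k`, so by Ramsey's theorem it has an infinite subset all of whose
`k`-element subsets lie in `𝓕`. Iterating gives a decreasing chain `D₀ = N̄ ⊇ D₁ ⊇ ⋯` with all
`k`-subsets of `D_{k+1}` in `𝓕`; a diagonal sequence with `m_i ∈ D_{i+1}` then has
`S₁(M) ⊆ 𝓕`, since a Schreier set `E` with `|E| = k` has all its indices at least `k`.
-/

open Filter

theorem exists_antitone_chain {p : ℕ → Set ℕ → Set ℕ → Prop} {L : Set ℕ} (hL : L.Infinite)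
    (step : ∀ n T, T ⊆ L → T.Infinite → ∃ T' ⊆ T, T'.Infinite ∧ p n T T') :
    ∃ D : ℕ → Set ℕ, D 0 = L ∧ Antitone D ∧ (∀ n, (D n).Infinite) ∧
      ∀ n, p n (D n) (D (n + 1)) := by
  choose g hgT hgInf hgp using step
  let D : ℕ → {T : Set ℕ // T ⊆ L ∧ T.Infinite} := fun n =>
    Nat.rec ⟨L, subset_rfl, hL⟩
      (fun n T => ⟨g n T.1 T.2.1 T.2.2, (hgT n T.1 T.2.1 T.2.2).trans T.2.1,
        hgInf n T.1 T.2.1 T.2.2⟩) n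
  exact ⟨fun n => (D n).1, rfl, antitone_nat_of_succ_le fun n => hgT .., fun n => (D n).2.2,
    fun n => hgp ..⟩

/-- The `sInf (D n)` increase strictly, and on their `(k + 1)`-subsets `c` depends only on the
least element; a colour taken infinitely often by `col` gives the homogeneous set. -/
theorem exists_homogeneous_succ_of_chain {α : Type*} [Finite α] {c : Finset ℕ → α} {k : ℕ}
    {D : ℕ → Set ℕ}
    (hD : Antitone D) (hDInf : ∀ n, (D n).Infinite)
    (hDmin : ∀ n, D (n + 1) ⊆ D n \ Iic (sInf (D n))) (col : ℕ → α)
    (hcol : ∀ n (E : Finset ℕ), ↑E ⊆ D (n + 1) → E.card = k →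
      c (insert (sInf (D n)) E) = col n) :
    ∃ L ⊆ D 0, L.Infinite ∧ ∃ a, ∀ E : Finset ℕ, ↑E ⊆ L → E.card = k + 1 → c E = a := by
  set x : ℕ → ℕ := fun n => sInf (D n)
  have hx : ∀ n, x n ∈ D n := fun n => Nat.sInf_mem (hDInf n).nonempty
  have hxMono : StrictMono x := strictMono_nat_of_lt_succ fun n => by
    simpa using (hDmin n (hx (n + 1))).2
  obtain ⟨a, ha⟩ := Finite.exists_infinite_fiber col
  refine ⟨x '' (col ⁻¹' {a}), image_subset_iff.mpr fun n _ => hD (Nat.zero_le n) (hx n),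
    (Set.infinite_coe_iff.mp ha).image hxMono.injective.injOn, a, fun E hEL hEcard => ?_⟩
  have hne : E.Nonempty := Finset.card_pos.mp (by omega)
  obtain ⟨n, hna, hn⟩ := hEL (E.min'_mem hne)
  have hxn : x n ∈ E := hn ▸ E.min'_mem hne
  have hrest : ↑(E.erase (x n)) ⊆ D (n + 1) := by
    intro y hy
    obtain ⟨hyn, hyE⟩ := Finset.mem_erase.mp hy
    obtain ⟨m, -, rfl⟩ := hEL hyE
    have hnm : n < m := hxMono.lt_iff_lt.mp <|
      lt_of_le_of_ne (hn ▸ E.min'_le _ hyE) (Ne.symm hyn)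
    exact hD hnm (hx m)
  calc c E = c (insert (x n) (E.erase (x n))) := by rw [Finset.insert_erase hxn]
    _ = a := by
      rw [hcol n _ hrest (by rw [Finset.card_erase_of_mem hxn]; omega)]
      exact hna

/-- Infinite Ramsey theorem. -/
theorem exists_infinite_homogeneous {α : Type*} [Finite α] (k : ℕ) (c : Finset ℕ → α) {L : Set ℕ}
    (hL : L.Infinite) :
    ∃ L' ⊆ L, L'.Infinite ∧ ∃ a, ∀ E : Finset ℕ, ↑E ⊆ L' → E.card = k → c E = a := by
  induction k generalizing c L with
  | zero => exact ⟨L, subset_rfl, hL, c ∅, fun E _ hE => by rw [Finset.card_eq_zero.mp hE]⟩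
  | succ k ih =>
    obtain ⟨D, rfl, hD, hDInf, hDstep⟩ := exists_antitone_chain hL
      (p := fun _ T T' => T' ⊆ T \ Iic (sInf T) ∧
        ∃ a, ∀ E : Finset ℕ, ↑E ⊆ T' → E.card = k → c (insert (sInf T) E) = a)
      fun _ T _ hT => by
        obtain ⟨T', hT', hT'Inf, hhom⟩ :=
          ih (fun E => c (insert (sInf T) E)) (hT.sdiff (finite_Iic _))
        exact ⟨T', hT'.trans sdiff_subset, hT'Inf, hT', hhom⟩
    choose col hcol using fun n => (hDstep n).2
    exact exists_homogeneous_succ_of_chain hD hDInf (fun n => (hDstep n).1) col hcol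

theorem enum1_mem {M : Set ℕ} (hM : M.Infinite) (i : ℕ) : enum1 M i ∈ M :=
  Nat.nth_mem_of_infinite hM _

theorem enum1_range {b : ℕ → ℕ} (hb : StrictMono b) :
    enum1 (range b) = fun i => b (i - 1) := by
  have hinf : (range b).Infinite := infinite_range_of_injective hb.injective
  have : Nat.nth (· ∈ range b) = b :=
    ((Nat.nth_strictMono hinf).range_inj hb).mp (Nat.range_nth_of_infinite hinf)
  funext i
  rw [enum1, this]

theorem card_lt_of_mem_restrict {𝓕 : Set (Finset ℕ)} (h𝓕 : Hereditary 𝓕) {L : Set ℕ} {k : ℕ}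
    (hL : ∀ E : Finset ℕ, ↑E ⊆ L → E.card = k → E ∉ 𝓕) {E : Finset ℕ}
    (hE : E ∈ restrict 𝓕 L) : E.card < k := by
  by_contra! hk
  obtain ⟨E', hE'E, hE'k⟩ := Finset.exists_subset_card_eq hk
  exact hL E' (fun x hx => hE.2 (hE'E hx)) hE'k (h𝓕 hE'E hE.1)

theorem push_subset_schreier1 {𝓖 : Set (Finset ℕ)} {M : Set ℕ} (hM : M.Infinite) {k : ℕ}
    (h𝓖 : ∀ E ∈ 𝓖, E.card ≤ k) (hMk : ∀ m ∈ M, k ≤ m) : push 𝓖 M ⊆ Schreier1 := by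
  rintro _ ⟨E, hE, rfl⟩ n hn
  obtain ⟨i, -, rfl⟩ := Finset.mem_image.mp hn
  calc _ ≤ E.card := Finset.card_image_le
    _ ≤ k := h𝓖 E hE
    _ ≤ _ := hMk _ (enum1_mem hM i)

theorem push_schreier1_range_subset {𝓕 : Set (Finset ℕ)} {D : ℕ → Set ℕ} (hD : Antitone D)
    (h𝓕 : ∀ k (E : Finset ℕ), ↑E ⊆ D (k + 1) → E.card = k → E ∈ 𝓕) {b : ℕ → ℕ}
    (hb : StrictMono b) (hbD : ∀ m, b m ∈ D (m + 2)) : push Schreier1 (range b) ⊆ 𝓕 := by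
  -- the `i`-th element `b (i - 1)` of `range b` (1-indexed) lies in `D (i + 1)` for `i ≥ 1`,
  -- and a Schreier set of size `k` has all its indices `≥ k`
  rintro _ ⟨E, hE, rfl⟩
  have hpos : ∀ i ∈ E, 1 ≤ i := fun i hi =>
    (Finset.card_pos.mpr ⟨i, hi⟩).trans_le (hE i hi)
  rw [enum1_range hb]
  refine h𝓕 E.card _ ?_ (Finset.card_image_of_injOn fun i hi j hj hij => ?_)
  · intro y hy
    obtain ⟨i, hi, rfl⟩ := Finset.mem_image.mp hy
    exact hD (by have := hE i hi; omega) (hbD (i - 1))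
  · have := hb.injective hij
    have := hpos i hi
    have := hpos j hj
    omega

theorem exists_push_schreier1_subset {𝓕 : Set (Finset ℕ)} {Nbar : Set ℕ} (hNbar : Nbar.Infinite)
    (h𝓕 : ∀ k, ∀ L ⊆ Nbar, L.Infinite → ∃ E : Finset ℕ, ↑E ⊆ L ∧ E.card = k ∧ E ∈ 𝓕) :
    ∃ M ⊆ Nbar, M.Infinite ∧ push Schreier1 M ⊆ 𝓕 := by
  have hhom : ∀ k L, L ⊆ Nbar → L.Infinite →
      ∃ L' ⊆ L, L'.Infinite ∧ ∀ E : Finset ℕ, ↑E ⊆ L' → E.card = k → E ∈ 𝓕 := by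
    intro k L hLN hL
    obtain ⟨L', hL'L, hL', a, ha⟩ := exists_infinite_homogeneous k (· ∈ 𝓕) hL
    obtain ⟨E₀, hE₀L', hE₀k, hE₀⟩ := h𝓕 k L' (hL'L.trans hLN) hL'
    have : a := ha E₀ hE₀L' hE₀k ▸ hE₀
    exact ⟨L', hL'L, hL', fun E hEL' hEk => (ha E hEL' hEk).symm ▸ this⟩
  obtain ⟨D, hD0, hD, hDInf, hDhom⟩ := exists_antitone_chain hNbar hhom
  obtain ⟨b, hb, hbD⟩ := extraction_forall_of_frequently fun m =>
    Nat.frequently_atTop_iff_infinite.mpr (hDInf (m + 2))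
  refine ⟨range b, ?_, infinite_range_of_injective hb.injective,
    push_schreier1_range_subset hD hDhom hb hbD⟩
  rintro _ ⟨m, rfl⟩
  exact hD0 ▸ hD (Nat.zero_le _) (hbD m)

theorem stmt8 (𝓕 : Set (Finset ℕ)) (h𝓕 : Hereditary 𝓕)
    (Nbar : Set ℕ) (hNbar : Nbar.Infinite) :
    (∃ M ⊆ Nbar, M.Infinite ∧ push Schreier1 M ⊆ 𝓕) ∨
      (∃ M ⊆ Nbar, ∃ N : Set ℕ, M.Infinite ∧ N.Infinite ∧
        push (restrict 𝓕 N) M ⊆ Schreier1) := by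
  by_cases h : ∃ k, ∃ L ⊆ Nbar, L.Infinite ∧ ∀ E : Finset ℕ, ↑E ⊆ L → E.card = k → E ∉ 𝓕
  · obtain ⟨k, L, -, hL, hLk⟩ := h
    have hM : (Nbar \ Iio k).Infinite := hNbar.sdiff (finite_Iio k)
    exact .inr ⟨Nbar \ Iio k, sdiff_subset, L, hM, hL, push_subset_schreier1 hM
      (fun E hE => (card_lt_of_mem_restrict h𝓕 hLk hE).le) fun m hm => not_lt.mp hm.2⟩
  · push Not at h
    exact .inl (exists_push_schreier1_subset hNbar h)
end

section
/- If F is an adequate family of finite subsets of ℕ, L is infinite, and s(F[L]) > α, then s(F[M]) > α for every infinite M ⊆ L. -/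
open Ordinal Set

/-!
Every `A ⊆ M` in the `β`-th derivative of `𝓕[L]` is in the `β`-th derivative of `𝓕[M]`: passing
to `M` only shrinks the exceptional set `{l : A ∪ {l} ∉ ·}`. Hence `∅` survives `α` derivatives
over `M`. It remains to see that the derivatives of `𝓕[M]` vanish eventually, so that `s(𝓕[M])`
is where they do. The intersection of all derivatives is closed under the derivative, and by
pointwise closedness it has a member `A` none of whose one-point extensions lie in it; for
infinite `M` that contradicts the finiteness of the exceptional set of `A`.
-/

universe u

section StrongDerivative

variable {L M : Set ℕ}

lemma sDeriv_zero (G : Set (Finset ℕ)) (L : Set ℕ) : sDeriv G L 0 = restrict G L :=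
  Ordinal.limitRecOn_zero _ _ _

lemma sDeriv_add_one (G : Set (Finset ℕ)) (L : Set ℕ) (β : Ordinal) :
    sDeriv G L (β + 1) =
      {A ∈ sDeriv G L β | {l ∈ L | insert l A ∉ sDeriv G L β}.Finite} :=
  Ordinal.limitRecOn_add_one _ _ _ _

lemma sDeriv_limit (G : Set (Finset ℕ)) (L : Set ℕ) {o : Ordinal} (ho : Order.IsSuccLimit o) :
    sDeriv G L o = ⋂ b : Set.Iio o, sDeriv G L b :=
  Ordinal.limitRecOn_limit _ _ _ _ ho

lemma sDeriv_add_one_subset (G : Set (Finset ℕ)) (L : Set ℕ) (β : Ordinal) :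
    sDeriv G L (β + 1) ⊆ sDeriv G L β := by
  rw [sDeriv_add_one]
  exact sep_subset _ _

lemma sDeriv_antitone (G : Set (Finset ℕ)) (L : Set ℕ) : Antitone (sDeriv G L) := by
  intro β γ hβγ
  induction γ using Ordinal.limitRecOn with
  | zero => rw [nonpos_iff_eq_zero.mp hβγ]
  | add_one γ ih =>
    rcases hβγ.eq_or_lt with rfl | hlt
    · rfl
    · exact (sDeriv_add_one_subset G L γ).trans (ih (Order.lt_add_one_iff.mp hlt))
  | limit γ hγ _ =>
    rcases hβγ.eq_or_lt with rfl | hlt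
    · rfl
    · rw [sDeriv_limit G L hγ]
      exact iInter_subset_of_subset ⟨β, hlt⟩ subset_rfl

lemma Hereditary.sDeriv {G : Set (Finset ℕ)} (hG : Hereditary G) (L : Set ℕ) (β : Ordinal) :
    Hereditary (sDeriv G L β) := by
  induction β using Ordinal.limitRecOn with
  | zero =>
    rw [sDeriv_zero]
    exact fun E F hEF hF => ⟨hG hEF hF.1, (Finset.coe_subset.mpr hEF).trans hF.2⟩
  | add_one β ih =>
    rw [sDeriv_add_one]
    refine fun E F hEF hF => ⟨ih hEF hF.1, hF.2.subset fun l hl => ⟨hl.1, fun h => hl.2 ?_⟩⟩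
    exact ih (Finset.insert_subset_insert l hEF) h
  | limit β hβ ih =>
    rw [sDeriv_limit G L hβ]
    exact fun E F hEF hF => mem_iInter.mpr fun b => ih b b.2 hEF (mem_iInter.mp hF b)

lemma Hereditary.empty_mem {𝓕 : Set (Finset ℕ)} (h𝓕 : Hereditary 𝓕) (hne : 𝓕.Nonempty) :
    ∅ ∈ 𝓕 :=
  let ⟨_, hA⟩ := hne
  h𝓕 (Finset.empty_subset _) hA

lemma restrict_sDeriv_subset (G : Set (Finset ℕ)) (hML : M ⊆ L) (β : Ordinal) :
    restrict (sDeriv G L β) M ⊆ sDeriv G M β := by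
  induction β using Ordinal.limitRecOn with
  | zero =>
    rw [sDeriv_zero, sDeriv_zero]
    exact fun A hA => ⟨hA.1.1, hA.2⟩
  | add_one β ih =>
    rw [sDeriv_add_one, sDeriv_add_one]
    rintro A ⟨⟨hA, hfin⟩, hAM⟩
    refine ⟨ih ⟨hA, hAM⟩, hfin.subset fun l hl => ⟨hML hl.1, fun h => hl.2 (ih ⟨h, ?_⟩)⟩⟩
    rw [Finset.coe_insert]
    exact insert_subset hl.1 hAM
  | limit β hβ ih =>
    rw [sDeriv_limit G L hβ, sDeriv_limit G M hβ]
    exact fun A hA => mem_iInter.mpr fun b => ih b b.2 ⟨mem_iInter.mp hA.1 b, hA.2⟩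

end StrongDerivative

namespace PtwiseClosed

variable {𝓕 : Set (Finset ℕ)}

lemma iUnion_finite (h𝓕 : PtwiseClosed 𝓕) {A : ℕ → Finset ℕ} (hA : Monotone A)
    (hA𝓕 : ∀ n, A n ∈ 𝓕) : (⋃ n, (A n : Set ℕ)).Finite := by
  classical
  set U := ⋃ n, (A n : Set ℕ)
  have hlim : Filter.Tendsto (fun n => chi (A n)) Filter.atTop (nhds fun k => decide (k ∈ U)) := by
    refine tendsto_pi_nhds.mpr fun k => tendsto_nhds_of_eventually_eq ?_
    by_cases hk : k ∈ U
    · obtain ⟨n₀, hn₀⟩ := mem_iUnion.mp hk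
      filter_upwards [Filter.eventually_ge_atTop n₀] with n hn
      simp [chi, hk, hA hn hn₀]
    · refine Filter.Eventually.of_forall fun n => ?_
      have : k ∉ A n := fun h => hk (mem_iUnion.mpr ⟨n, h⟩)
      simp [chi, hk, this]
  obtain ⟨E, -, hE⟩ :=
    h𝓕.mem_of_tendsto hlim (Filter.Eventually.of_forall fun n => ⟨A n, hA𝓕 n, rfl⟩)
  have hEU : (E : Set ℕ) = U := Set.ext fun k => by simpa [chi] using congrFun hE k
  exact hEU ▸ E.finite_toSet

/-- An endless chain of one-point extensions inside `𝓕` would converge pointwise to an infinite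
set. -/
lemma exists_insert_mem_imp_mem (h𝓕 : PtwiseClosed 𝓕) {S : Set (Finset ℕ)} (hS : S ⊆ 𝓕)
    (hne : S.Nonempty) : ∃ A ∈ S, ∀ l, insert l A ∈ S → l ∈ A := by
  by_contra! hext
  obtain ⟨A₀, hA₀⟩ := hne
  choose! next hnext using hext
  set A : ℕ → Finset ℕ := fun n => (fun B => insert (next B) B)^[n] A₀
  have hA_succ (n : ℕ) : A (n + 1) = insert (next (A n)) (A n) :=
    Function.iterate_succ_apply' _ _ _
  have hAS (n : ℕ) : A n ∈ S := by
    induction n with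
    | zero => exact hA₀
    | succ n ih => exact hA_succ n ▸ (hnext _ ih).1
  have hAcard (n : ℕ) : n ≤ (A n).card := by
    induction n with
    | zero => exact Nat.zero_le _
    | succ n ih => rw [hA_succ, Finset.card_insert_of_notMem (hnext _ (hAS n)).2]; omega
  have hAmono : Monotone A :=
    monotone_nat_of_le_succ fun n => hA_succ n ▸ Finset.subset_insert _ _
  have hfin := h𝓕.iUnion_finite hAmono fun n => hS (hAS n)
  set N := hfin.toFinset.card
  have hsub : A (N + 1) ⊆ hfin.toFinset :=
    hfin.subset_toFinset.mpr (subset_iUnion (fun n => (A n : Set ℕ)) (N + 1))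
  have := (hAcard (N + 1)).trans (Finset.card_le_card hsub)
  omega

end PtwiseClosed

def sKernel (G : Set (Finset ℕ)) (L : Set ℕ) : Set (Finset ℕ) :=
  ⋂ β : Ordinal.{u}, sDeriv G L β

section Kernel

variable {G : Set (Finset ℕ)} {L : Set ℕ}

lemma sKernel_subset (G : Set (Finset ℕ)) (L : Set ℕ) : sKernel.{u} G L ⊆ G := fun _ hA =>
  (sDeriv_zero G L ▸ mem_iInter.mp hA 0 : _ ∈ restrict G L).1

/-- Countably many failures of `insert l A` all occur below their supremum `β`, and
`A ∈ sDeriv G L (β + 1)` allows only finitely many. -/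
lemma finite_setOf_insert_notMem_sKernel {A : Finset ℕ} (hA : A ∈ sKernel.{u} G L) :
    {l ∈ L | insert l A ∉ sKernel.{u} G L}.Finite := by
  have hout (l : ℕ) (hl : insert l A ∉ sKernel.{u} G L) :
      ∃ β : Ordinal.{u}, insert l A ∉ sDeriv G L β := by
    simpa [sKernel] using hl
  choose! r hr using hout
  have hA' := mem_iInter.mp hA ((⨆ l, r l) + 1)
  rw [sDeriv_add_one] at hA'
  exact hA'.2.subset fun l hl =>
    ⟨hl.1, fun h => hr l hl.2 (sDeriv_antitone G L (Ordinal.le_iSup r l) h)⟩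

lemma sKernel_eq_empty (hG : PtwiseClosed G) (hL : L.Infinite) : sKernel.{u} G L = ∅ := by
  by_contra hne
  obtain ⟨A, hA, hmax⟩ :=
    hG.exists_insert_mem_imp_mem (sKernel_subset G L) (nonempty_iff_ne_empty.mpr hne)
  refine (hL.sdiff A.finite_toSet).mono ?_ (finite_setOf_insert_notMem_sKernel hA)
  exact fun l hl => ⟨hl.1, fun h => hl.2 (hmax l h)⟩

lemma exists_sDeriv_eq_empty (hh : Hereditary G) (hc : PtwiseClosed G) (hL : L.Infinite) :
    ∃ β : Ordinal.{u}, sDeriv G L β = ∅ := by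
  have : ∅ ∉ sKernel.{u} G L := sKernel_eq_empty hc hL ▸ notMem_empty _
  obtain ⟨β, hβ⟩ : ∃ β : Ordinal.{u}, ∅ ∉ sDeriv G L β := by simpa [sKernel] using this
  exact ⟨β, not_nonempty_iff_eq_empty.mp fun hne => hβ ((hh.sDeriv L β).empty_mem hne)⟩

end Kernel

section Index

variable {G : Set (Finset ℕ)} {L : Set ℕ} {α : Ordinal.{u}}

lemma sDeriv_nonempty_of_lt_sIndex (h : α < sIndex G L) : (sDeriv G L α).Nonempty :=
  nonempty_iff_ne_empty.mpr fun h' => (csInf_le' (s := {β | sDeriv G L β = ∅}) h').not_gt h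

lemma lt_sIndex_of_sDeriv_nonempty (hex : ∃ β : Ordinal.{u}, sDeriv G L β = ∅)
    (h : (sDeriv G L α).Nonempty) : α < sIndex G L := by
  by_contra! hle
  have hempty : sDeriv G L (sIndex G L) = ∅ := csInf_mem hex
  exact h.ne_empty (subset_empty_iff.mp (hempty ▸ sDeriv_antitone G L hle))

end Index

theorem stmt13_general (𝓕 : Set (Finset ℕ)) (h𝓕 : Adequate 𝓕)
    (L : Set ℕ) (α : Ordinal) (hα : α < sIndex 𝓕 L)
    (M : Set ℕ) (hML : M ⊆ L) (hM : M.Infinite) :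
    α < sIndex 𝓕 M := by
  obtain ⟨hh, hc⟩ := h𝓕
  have hL : ∅ ∈ sDeriv 𝓕 L α := (hh.sDeriv L α).empty_mem (sDeriv_nonempty_of_lt_sIndex hα)
  have hM' : ∅ ∈ sDeriv 𝓕 M α := restrict_sDeriv_subset 𝓕 hML α ⟨hL, by simp⟩
  exact lt_sIndex_of_sDeriv_nonempty (exists_sDeriv_eq_empty hh hc hM) ⟨∅, hM'⟩

theorem stmt13 (𝓕 : Set (Finset ℕ)) (h𝓕 : Adequate 𝓕)
    (L : Set ℕ) (hL : L.Infinite) (α : Ordinal) (hα : α < sIndex 𝓕 L)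
    (M : Set ℕ) (hML : M ⊆ L) (hM : M.Infinite) :
    α < sIndex 𝓕 M :=
  stmt13_general 𝓕 h𝓕 L α hα M hML hM
end
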